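/- arXiv:2409.14687 — 2 statements merged into one kernel-verified Lean document; each statement's English description precedes it below -/
import Mathlib

section
/- (Error estimate of the Sinkhorn divergence) For ε > 0 and probability vectors μ ∈ ℝ^N, ν ∈ ℝ^M with strictly positive entries, define the Sinkhorn divergence SD_ε(μ,ν) := OT_ε(μ,ν) − (1/2)OT_ε(μ,μ) − (1/2)OT_ε(ν,ν). Then |SD_ε(μ,ν) − OT(μ,ν)| ≤ 2 ε log(NM). -/
open Finset

def IsProbVec {N : ℕ} (μ : Fin N → ℝ) : Prop :=
  (∀ i, 0 < μ i) ∧ ∑ i, μ i = 1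

def IsCoupling {N M : ℕ} (μ : Fin N → ℝ) (ν : Fin M → ℝ)
    (π : Fin N → Fin M → ℝ) : Prop :=
  (∀ i j, 0 ≤ π i j) ∧ (∀ i, ∑ j, π i j = μ i) ∧ (∀ j, ∑ i, π i j = ν j)

/-- Kullback–Leibler divergence of a coupling `π` relative to `μ ⊗ ν`
(with the convention `0 * log 0 = 0`, which holds since `Real.log 0 = 0`). -/
noncomputable def klDiv {N M : ℕ} (μ : Fin N → ℝ) (ν : Fin M → ℝ)
    (π : Fin N → Fin M → ℝ) : ℝ :=
  ∑ i, ∑ j, π i j * Real.log (π i j / (μ i * ν j))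

/-- Shannon entropy. -/
noncomputable def shannonEntropy {N : ℕ} (μ : Fin N → ℝ) : ℝ :=
  -∑ i, μ i * Real.log (μ i)

/-- Pairing `⟨C, π⟩` of a cost matrix with a transport plan. -/
noncomputable def costInner {N M : ℕ} (C : Matrix (Fin N) (Fin M) ℝ)
    (π : Fin N → Fin M → ℝ) : ℝ :=
  ∑ i, ∑ j, C i j * π i j

/-- Unregularized optimal transport cost. -/
noncomputable def OT {N M : ℕ} (C : Matrix (Fin N) (Fin M) ℝ)
    (μ : Fin N → ℝ) (ν : Fin M → ℝ) : ℝ :=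
  sInf {x | ∃ π, IsCoupling μ ν π ∧ x = costInner C π}

/-- Entropic optimal transport cost. -/
noncomputable def OTeps {N M : ℕ} (ε : ℝ) (C : Matrix (Fin N) (Fin M) ℝ)
    (μ : Fin N → ℝ) (ν : Fin M → ℝ) : ℝ :=
  sInf {x | ∃ π, IsCoupling μ ν π ∧ x = costInner C π + ε * klDiv μ ν π}

/-! Every coupling `π` of `μ` and `ν` satisfies `0 ≤ KL(π ‖ μ ⊗ ν) ≤ H(ν)`, since `π i j ≤ μ i`.
Hence `OT ≤ OT_ε ≤ OT + ε H(ν)`, and for a cost vanishing on the diagonal `OT(μ, μ) = 0`, so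
`0 ≤ OT_ε(μ, μ) ≤ ε H(μ)`. Combining the three estimates, `SD_ε(μ, ν) − OT(μ, ν)` lies between
`−ε (H(μ) + H(ν)) / 2` and `ε H(ν)`, and `H(μ) + H(ν) ≤ log N + log M = log (N M)`. -/

lemma sub_le_mul_log_div {p q : ℝ} (hp : 0 ≤ p) (hq : 0 < q) : p - q ≤ p * Real.log (p / q) := by
  have h := mul_le_mul_of_nonneg_left (Real.self_sub_one_le_mul_log (div_nonneg hp hq.le)) hq.le
  have hq' : q ≠ 0 := hq.ne'
  calc p - q = q * (p / q - 1) := by field_simp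
    _ ≤ q * (p / q * Real.log (p / q)) := h
    _ = p * Real.log (p / q) := by field_simp

namespace IsProbVec

variable {K : ℕ} {p : Fin K → ℝ}

lemma card_pos (hp : IsProbVec p) : 0 < K := by
  rcases Nat.eq_zero_or_pos K with rfl | hK
  · simpa using hp.2
  · exact hK

lemma le_one (hp : IsProbVec p) (i : Fin K) : p i ≤ 1 :=
  hp.2 ▸ single_le_sum (fun j _ => (hp.1 j).le) (mem_univ i)

lemma shannonEntropy_nonneg (hp : IsProbVec p) : 0 ≤ shannonEntropy p :=
  neg_nonneg.2 <| sum_nonpos fun i _ => Real.mul_log_nonpos (hp.1 i).le (hp.le_one i)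

/-- Gibbs' inequality against the uniform distribution `1 / K`. -/
lemma shannonEntropy_le_log_card (hp : IsProbVec p) : shannonEntropy p ≤ Real.log K := by
  have hK : (0 : ℝ) < K := Nat.cast_pos.2 hp.card_pos
  have hsplit : ∀ i, p i * Real.log (p i / (K : ℝ)⁻¹) = p i * Real.log (p i) + p i * Real.log K :=
    fun i => by
    rw [div_inv_eq_mul, Real.log_mul (hp.1 i).ne' hK.ne', mul_add]
  have hgibbs : 0 ≤ ∑ i, p i * Real.log (p i / (K : ℝ)⁻¹) :=
    calc (0 : ℝ) = ∑ i, (p i - (K : ℝ)⁻¹) := by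
          rw [sum_sub_distrib, hp.2, sum_const, card_univ, Fintype.card_fin, nsmul_eq_mul,
            mul_inv_cancel₀ hK.ne', sub_self]
      _ ≤ ∑ i, p i * Real.log (p i / (K : ℝ)⁻¹) :=
          sum_le_sum fun i _ => sub_le_mul_log_div (hp.1 i).le (inv_pos.2 hK)
  simp only [hsplit, sum_add_distrib, ← sum_mul, hp.2, one_mul] at hgibbs
  rw [shannonEntropy]
  linarith

end IsProbVec

section KullbackLeibler

variable {N M : ℕ} {μ : Fin N → ℝ} {ν : Fin M → ℝ} {π : Fin N → Fin M → ℝ}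

lemma isCoupling_prod (hμ : IsProbVec μ) (hν : IsProbVec ν) :
    IsCoupling μ ν (fun i j => μ i * ν j) :=
  ⟨fun i j => mul_nonneg (hμ.1 i).le (hν.1 j).le,
    fun i => by rw [← mul_sum, hν.2, mul_one], fun j => by rw [← sum_mul, hμ.2, one_mul]⟩

lemma isCoupling_diag (hμ : ∀ i, 0 ≤ μ i) : IsCoupling μ μ (fun i j => if i = j then μ i else 0) :=
  ⟨fun i j => ite_nonneg (hμ i) le_rfl, fun i => by simp, fun j => by simp⟩

lemma IsCoupling.le_left (h : IsCoupling μ ν π) (i : Fin N) (j : Fin M) : π i j ≤ μ i :=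
  h.2.1 i ▸ single_le_sum (fun j' _ => h.1 i j') (mem_univ j)

lemma klDiv_nonneg (hμ : ∀ i, 0 < μ i) (hν : IsProbVec ν) (h : IsCoupling μ ν π) :
    0 ≤ klDiv μ ν π := by
  have hmass : ∑ i, ∑ j, π i j = ∑ i, ∑ j, μ i * ν j := by
    simp only [h.2.1, ← mul_sum, hν.2, mul_one]
  calc (0 : ℝ) = ∑ i, ∑ j, (π i j - μ i * ν j) := by simp only [sum_sub_distrib, hmass, sub_self]
    _ ≤ klDiv μ ν π := sum_le_sum fun i _ => sum_le_sum fun j _ =>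
          sub_le_mul_log_div (h.1 i j) (mul_pos (hμ i) (hν.1 j))

lemma klDiv_le_shannonEntropy_right (hμ : ∀ i, 0 < μ i) (hν : ∀ j, 0 < ν j)
    (h : IsCoupling μ ν π) : klDiv μ ν π ≤ shannonEntropy ν := by
  have hterm : ∀ i j, π i j * Real.log (π i j / (μ i * ν j)) ≤ π i j * -Real.log (ν j) := by
    intro i j
    have hμν := mul_pos (hμ i) (hν j)
    rcases (h.1 i j).eq_or_lt with hπ | hπ
    · simp [← hπ]
    · rw [← Real.log_inv]
      refine mul_le_mul_of_nonneg_left (Real.log_le_log (div_pos hπ hμν) ?_) hπ.le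
      rw [div_le_iff₀ hμν]
      exact (h.le_left i j).trans_eq (by field_simp [(hν j).ne'])
  calc klDiv μ ν π ≤ ∑ i, ∑ j, π i j * -Real.log (ν j) :=
        sum_le_sum fun i _ => sum_le_sum fun j _ => hterm i j
    _ = shannonEntropy ν := by
        rw [sum_comm, shannonEntropy, ← sum_neg_distrib]
        refine sum_congr rfl fun j _ => ?_
        rw [← sum_mul, h.2.2 j, mul_neg]

end KullbackLeibler

section OptimalTransport

variable {N M : ℕ} {C : Matrix (Fin N) (Fin M) ℝ} {μ : Fin N → ℝ} {ν : Fin M → ℝ} {ε : ℝ}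

lemma costInner_nonneg (hC : ∀ i j, 0 ≤ C i j) {π : Fin N → Fin M → ℝ}
    (hπ : ∀ i j, 0 ≤ π i j) : 0 ≤ costInner C π :=
  sum_nonneg fun i _ => sum_nonneg fun j _ => mul_nonneg (hC i j) (hπ i j)

lemma OT_le_costInner (hC : ∀ i j, 0 ≤ C i j) {π : Fin N → Fin M → ℝ} (h : IsCoupling μ ν π) :
    OT C μ ν ≤ costInner C π :=
  csInf_le ⟨0, fun _ ⟨_, hπ', hx⟩ => hx ▸ costInner_nonneg hC hπ'.1⟩ ⟨π, h, rfl⟩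

lemma le_OT (hμ : IsProbVec μ) (hν : IsProbVec ν) {b : ℝ}
    (hb : ∀ π, IsCoupling μ ν π → b ≤ costInner C π) : b ≤ OT C μ ν :=
  le_csInf ⟨_, _, isCoupling_prod hμ hν, rfl⟩ fun _ ⟨π, h, hx⟩ => hx ▸ hb π h

lemma OT_nonneg (hC : ∀ i j, 0 ≤ C i j) (hμ : IsProbVec μ) (hν : IsProbVec ν) :
    0 ≤ OT C μ ν :=
  le_OT hμ hν fun _ h => costInner_nonneg hC h.1

lemma OT_self_eq_zero {C : Matrix (Fin N) (Fin N) ℝ} (hC : ∀ i j, 0 ≤ C i j)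
    (hdiag : ∀ i, C i i = 0) (hμ : IsProbVec μ) : OT C μ μ = 0 :=
  le_antisymm
    ((OT_le_costInner hC (isCoupling_diag fun i => (hμ.1 i).le)).trans_eq
      (by simp [costInner, hdiag]))
    (OT_nonneg hC hμ hμ)

lemma OTeps_le_costInner_add (hε : 0 ≤ ε) (hC : ∀ i j, 0 ≤ C i j) (hμ : IsProbVec μ)
    (hν : IsProbVec ν) {π : Fin N → Fin M → ℝ} (h : IsCoupling μ ν π) :
    OTeps ε C μ ν ≤ costInner C π + ε * klDiv μ ν π :=
  csInf_le ⟨0, fun _ ⟨_, hπ', hx⟩ => hx ▸ add_nonneg (costInner_nonneg hC hπ'.1)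
    (mul_nonneg hε (klDiv_nonneg hμ.1 hν hπ'))⟩ ⟨π, h, rfl⟩

lemma le_OTeps (hμ : IsProbVec μ) (hν : IsProbVec ν) {b : ℝ}
    (hb : ∀ π, IsCoupling μ ν π → b ≤ costInner C π + ε * klDiv μ ν π) : b ≤ OTeps ε C μ ν :=
  le_csInf ⟨_, _, isCoupling_prod hμ hν, rfl⟩ fun _ ⟨π, h, hx⟩ => hx ▸ hb π h

lemma OT_le_OTeps (hε : 0 ≤ ε) (hC : ∀ i j, 0 ≤ C i j) (hμ : IsProbVec μ) (hν : IsProbVec ν) :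
    OT C μ ν ≤ OTeps ε C μ ν :=
  le_OTeps hμ hν fun _ h =>
    (OT_le_costInner hC h).trans (le_add_of_nonneg_right (mul_nonneg hε (klDiv_nonneg hμ.1 hν h)))

lemma OTeps_le_OT_add (hε : 0 ≤ ε) (hC : ∀ i j, 0 ≤ C i j) (hμ : IsProbVec μ)
    (hν : IsProbVec ν) : OTeps ε C μ ν ≤ OT C μ ν + ε * shannonEntropy ν := by
  suffices OTeps ε C μ ν - ε * shannonEntropy ν ≤ OT C μ ν by linarith
  refine le_OT hμ hν fun π h => ?_
  have hOTeps := OTeps_le_costInner_add hε hC hμ hν h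
  have hkl := mul_le_mul_of_nonneg_left (klDiv_le_shannonEntropy_right hμ.1 hν.1 h) hε
  linarith

end OptimalTransport

noncomputable def sinkhornDivergence {N M : ℕ} (ε : ℝ) (Cxy : Matrix (Fin N) (Fin M) ℝ)
    (Cxx : Matrix (Fin N) (Fin N) ℝ) (Cyy : Matrix (Fin M) (Fin M) ℝ)
    (μ : Fin N → ℝ) (ν : Fin M → ℝ) : ℝ :=
  OTeps ε Cxy μ ν - (1 / 2) * OTeps ε Cxx μ μ - (1 / 2) * OTeps ε Cyy ν ν

theorem abs_sinkhornDivergence_sub_OT_le {N M : ℕ} {ε : ℝ} (hε : 0 ≤ ε)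
    {μ : Fin N → ℝ} {ν : Fin M → ℝ} (hμ : IsProbVec μ) (hν : IsProbVec ν)
    {Cxy : Matrix (Fin N) (Fin M) ℝ} {Cxx : Matrix (Fin N) (Fin N) ℝ}
    {Cyy : Matrix (Fin M) (Fin M) ℝ} (hCxy : ∀ i j, 0 ≤ Cxy i j) (hCxx : ∀ i j, 0 ≤ Cxx i j)
    (hCyy : ∀ i j, 0 ≤ Cyy i j) (hCxx_diag : ∀ i, Cxx i i = 0) (hCyy_diag : ∀ j, Cyy j j = 0) :
    |sinkhornDivergence ε Cxy Cxx Cyy μ ν - OT Cxy μ ν| ≤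
      ε * (shannonEntropy μ + shannonEntropy ν) := by
  have hxy_low := OT_le_OTeps hε hCxy hμ hν
  have hxy_up := OTeps_le_OT_add hε hCxy hμ hν
  have hxx_low := (OT_nonneg hCxx hμ hμ).trans (OT_le_OTeps hε hCxx hμ hμ)
  have hxx_up := OTeps_le_OT_add hε hCxx hμ hμ
  have hyy_low := (OT_nonneg hCyy hν hν).trans (OT_le_OTeps hε hCyy hν hν)
  have hyy_up := OTeps_le_OT_add hε hCyy hν hν
  rw [OT_self_eq_zero hCxx hCxx_diag hμ] at hxx_up
  rw [OT_self_eq_zero hCyy hCyy_diag hν] at hyy_up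
  have hHμ := mul_nonneg hε hμ.shannonEntropy_nonneg
  have hHν := mul_nonneg hε hν.shannonEntropy_nonneg
  rw [sinkhornDivergence, abs_le]
  constructor <;> linarith

/-- Error estimate of the Sinkhorn divergence:
with cost matrices given by squared Euclidean distances of the support points,
`|SD_ε(μ,ν) − OT(μ,ν)| ≤ 2 ε log (N M)`. -/
theorem sinkhorn_divergence_error {N M d : ℕ} (ε : ℝ) (hε : 0 < ε)
    (x : Fin N → Fin d → ℝ) (y : Fin M → Fin d → ℝ)
    (μ : Fin N → ℝ) (ν : Fin M → ℝ) (hμ : IsProbVec μ) (hν : IsProbVec ν)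
    (Cxy : Matrix (Fin N) (Fin M) ℝ) (Cxx : Matrix (Fin N) (Fin N) ℝ)
    (Cyy : Matrix (Fin M) (Fin M) ℝ)
    (hCxy : ∀ i j, Cxy i j = ∑ t, (x i t - y j t) ^ 2)
    (hCxx : ∀ i j, Cxx i j = ∑ t, (x i t - x j t) ^ 2)
    (hCyy : ∀ i j, Cyy i j = ∑ t, (y i t - y j t) ^ 2) :
    |(OTeps ε Cxy μ ν - (1 / 2) * OTeps ε Cxx μ μ - (1 / 2) * OTeps ε Cyy ν ν)
        - OT Cxy μ ν| ≤ 2 * ε * Real.log ((N : ℝ) * (M : ℝ)) := by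
  have hSD := abs_sinkhornDivergence_sub_OT_le (Cxy := Cxy) (Cxx := Cxx) (Cyy := Cyy)
    hε.le hμ hν (fun i j => by rw [hCxy]; positivity) (fun i j => by rw [hCxx]; positivity)
    (fun i j => by rw [hCyy]; positivity) (fun i => by simp [hCxx]) (fun j => by simp [hCyy])
  have hN : (0 : ℝ) < N := Nat.cast_pos.2 hμ.card_pos
  have hM : (0 : ℝ) < M := Nat.cast_pos.2 hν.card_pos
  have hH : shannonEntropy μ + shannonEntropy ν ≤ Real.log (N * M) := by
    rw [Real.log_mul hN.ne' hM.ne']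
    exact add_le_add hμ.shannonEntropy_le_log_card hν.shannonEntropy_le_log_card
  have hH_nonneg := add_nonneg hμ.shannonEntropy_nonneg hν.shannonEntropy_nonneg
  calc _ ≤ ε * (shannonEntropy μ + shannonEntropy ν) := hSD
    _ ≤ 2 * ε * Real.log (N * M) := by nlinarith
end

section
/- (Error estimate of Sinkhorn MDS, abstract form) Let B and B_ε be N×N real symmetric positive semidefinite matrices with eigenvalues λ_1 ≥ ... ≥ λ_N and λ_{1,ε} ≥ ... ≥ λ_{N,ε}, and orthonormal eigenvectors v_1,...,v_N and v_{1,ε},...,v_{N,ε} chosen so that ⟨v_{j,ε}, v_j⟩ ≥ 0. Fix k ≤ N with λ_k > λ_{k+1} and λ_k > 0 (set λ_{N+1} = −∞). Define embeddings Φ(i) = (λ_1^{1/2}v_1(i),...,λ_k^{1/2}v_k(i)) and Φ_ε(i) analogously with B_ε. Then Σ_{i=1}^N ‖Φ_ε(i) − Φ(i)‖² ≤ (16 λ_1 k / (λ_k − λ_{k+1})²) ‖B_ε − B‖_2² + 2k ‖B_ε − B‖_2, assuming the Davis–Kahan bound Σ_{j=1}^k sin²θ_j ≤ 4k‖B_ε−B‖_2²/(λ_k−λ_{k+1})²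 where θ_j = arccos⟨v_{j,ε}, v_j⟩. -/
open Finset

/-- Operator (spectral) norm of a real matrix, i.e. the norm of the induced
linear map between Euclidean spaces. -/
noncomputable def opNorm {N M : ℕ} (A : Matrix (Fin M) (Fin N) ℝ) : ℝ :=
  ‖LinearMap.toContinuousLinearMap (Matrix.toEuclideanLin A)‖

/-- Frobenius norm of a real matrix. -/
noncomputable def frobNorm {N M : ℕ} (A : Matrix (Fin M) (Fin N) ℝ) : ℝ :=
  Real.sqrt (∑ i, ∑ j, (A i j) ^ 2)

/-!
The `j`-th coordinate of `Φ_ε − Φ` is the vector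
`√λ_{j,ε} v_{j,ε} − √λ_j v_j = √λ_j (v_{j,ε} − v_j) + (√λ_{j,ε} − √λ_j) v_{j,ε}`, whose squared
norm is at most twice the sum of the squared norms of the two summands. Since
`cos θ_j = ⟨v_{j,ε}, v_j⟩ ∈ [0, 1]`, the first has squared norm
`λ_j (2 − 2 cos θ_j) ≤ 2 λ_1 sin² θ_j`; the second has squared norm
`(√λ_{j,ε} − √λ_j)² ≤ |λ_{j,ε} − λ_j| ≤ ‖B_ε − B‖₂` (Weyl). Summing over `j ≤ k` and inserting
the Davis–Kahan bound gives the estimate.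

Weyl's inequality is proved by the min–max argument: `span {v_1, …, v_j}` and
`span {v_{j,ε}, …, v_{N,ε}}` have dimensions adding up to `N + 1`, so they share a vector `w ≠ 0`,
and `λ_j ‖w‖² ≤ ⟨w, B w⟩` while `⟨w, B_ε w⟩ ≤ λ_{j,ε} ‖w‖²`.
-/

open Real Module

theorem Real.sqrt_sub_sqrt_sq_le_abs (a b : ℝ) : (√a - √b) ^ 2 ≤ |a - b| := by
  wlog hba : b ≤ a generalizing a b
  · rw [← neg_sub, neg_sq, abs_sub_comm]
    exact this b a (le_of_not_ge hba)
  calc (√a - √b) ^ 2 ≤ (√a - √b) * (√a + √b) := by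
        nlinarith [sqrt_nonneg b, sqrt_le_sqrt hba]
    _ = max a 0 - max b 0 := by rw [← sq_sqrt', ← sq_sqrt']; ring
    _ ≤ |a - b| := by
        rw [abs_of_nonneg (sub_nonneg.2 hba)]
        rcases max_cases a 0 with ha | ha <;> rcases max_cases b 0 with hb | hb <;> linarith

section InnerProductSpace

variable {F : Type*} [NormedAddCommGroup F] [InnerProductSpace ℝ F]

theorem norm_sqrt_smul_sub_sqrt_smul_sq_le {x y : F} (hx : ‖x‖ = 1) (hy : ‖y‖ = 1)
    (hxy : 0 ≤ inner ℝ x y) {a b L : ℝ} (hbL : b ≤ L) (hL : 0 ≤ L) :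
    ‖√a • x - √b • y‖ ^ 2 ≤ 4 * L * sin (arccos (inner ℝ x y)) ^ 2 + 2 * |a - b| := by
  set c := inner ℝ x y
  have hc₁ : c ≤ 1 := (real_inner_le_norm x y).trans (by rw [hx, hy, one_mul])
  have hsin : sin (arccos c) ^ 2 = 1 - c ^ 2 := by rw [sin_arccos, sq_sqrt (by nlinarith)]
  have hdist : ‖x - y‖ ^ 2 = 2 - 2 * c := by rw [norm_sub_sq_real, hx, hy]; ring
  have hb : √b ^ 2 ≤ L := by rw [sq_sqrt']; exact max_le hbL hL
  have htri : ‖√a • x - √b • y‖ ≤ √b * ‖x - y‖ + |√a - √b| :=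
    calc ‖√a • x - √b • y‖ = ‖√b • (x - y) + (√a - √b) • x‖ := by
          rw [smul_sub, sub_smul]; abel_nf
      _ ≤ √b * ‖x - y‖ + |√a - √b| := by
          grw [norm_add_le, norm_smul, norm_smul, hx, norm_of_nonneg (sqrt_nonneg b),
            norm_eq_abs, mul_one]
  calc ‖√a • x - √b • y‖ ^ 2 ≤ 2 * (√b ^ 2 * ‖x - y‖ ^ 2) + 2 * (√a - √b) ^ 2 := by
        nlinarith [norm_nonneg (√a • x - √b • y), sq_abs (√a - √b),
          sq_nonneg (√b * ‖x - y‖ - |√a - √b|)]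
    _ ≤ 4 * L * sin (arccos c) ^ 2 + 2 * |a - b| := by
        rw [hsin, hdist]
        -- `2 - 2c ≤ 2 (1 - c²)` because `0 ≤ c ≤ 1`
        nlinarith [sqrt_sub_sqrt_sq_le_abs a b,
          mul_le_mul_of_nonneg_right hb (by linarith : 0 ≤ 2 - 2 * c),
          mul_nonneg hL (mul_nonneg hxy (sub_nonneg.2 hc₁))]

section Rayleigh

variable {ι : Type*} [Fintype ι] {u : ι → F} {A : F →ₗ[ℝ] F} {μ : ι → ℝ}

theorem Orthonormal.inner_sum_smul_map_sum_smul (hu : Orthonormal ℝ u)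
    (hA : ∀ i, A (u i) = μ i • u i) (c : ι → ℝ) :
    inner ℝ (∑ i, c i • u i) (A (∑ i, c i • u i)) = ∑ i, μ i * c i ^ 2 := by
  simp_rw [map_sum, map_smul, hA, smul_smul]
  rw [hu.inner_sum]
  exact sum_congr rfl fun i _ ↦ by rw [conj_trivial]; ring

theorem Orthonormal.norm_sum_smul_sq (hu : Orthonormal ℝ u) (c : ι → ℝ) :
    ‖∑ i, c i • u i‖ ^ 2 = ∑ i, c i ^ 2 := by
  rw [← real_inner_self_eq_norm_sq, hu.inner_sum]
  exact sum_congr rfl fun i _ ↦ by rw [conj_trivial]; ring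

theorem Orthonormal.le_inner_map_self_of_mem_span (hu : Orthonormal ℝ u)
    (hA : ∀ i, A (u i) = μ i • u i) {m : ℝ} (hm : ∀ i, m ≤ μ i) {w : F}
    (hw : w ∈ Submodule.span ℝ (Set.range u)) : m * ‖w‖ ^ 2 ≤ inner ℝ w (A w) := by
  obtain ⟨c, rfl⟩ := Submodule.mem_span_range_iff_exists_fun ℝ |>.mp hw
  rw [hu.inner_sum_smul_map_sum_smul hA, hu.norm_sum_smul_sq, mul_sum]
  exact sum_le_sum fun i _ ↦ mul_le_mul_of_nonneg_right (hm i) (sq_nonneg _)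

theorem Orthonormal.inner_map_self_le_of_mem_span (hu : Orthonormal ℝ u)
    (hA : ∀ i, A (u i) = μ i • u i) {m : ℝ} (hm : ∀ i, μ i ≤ m) {w : F}
    (hw : w ∈ Submodule.span ℝ (Set.range u)) : inner ℝ w (A w) ≤ m * ‖w‖ ^ 2 := by
  obtain ⟨c, rfl⟩ := Submodule.mem_span_range_iff_exists_fun ℝ |>.mp hw
  rw [hu.inner_sum_smul_map_sum_smul hA, hu.norm_sum_smul_sq, mul_sum]
  exact sum_le_sum fun i _ ↦ mul_le_mul_of_nonneg_right (hm i) (sq_nonneg _)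

end Rayleigh

theorem Orthonormal.finrank_span_restrict {ι : Type*} {u : ι → F} (hu : Orthonormal ℝ u)
    (s : Finset ι) : finrank ℝ (Submodule.span ℝ (Set.range fun i : s ↦ u i)) = #s :=
  (finrank_span_eq_card (hu.comp _ Subtype.val_injective).linearIndependent).trans
    (Fintype.card_coe s)

theorem Submodule.exists_ne_zero_mem_inf_of_finrank_lt_add [FiniteDimensional ℝ F]
    {S T : Submodule ℝ F} (h : finrank ℝ F < finrank ℝ S + finrank ℝ T) :
    ∃ w ∈ S, w ∈ T ∧ w ≠ 0 := by
  by_contra! hST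
  exact (finrank_add_finrank_le_of_disjoint (disjoint_def.2 hST)).not_gt h

theorem ContinuousLinearMap.neg_norm_mul_norm_sq_le_inner_map_self (T : F →L[ℝ] F) (w : F) :
    -(‖T‖ * ‖w‖ ^ 2) ≤ inner ℝ w (T w) := by
  have := (abs_real_inner_le_norm w (T w)).trans
    (mul_le_mul_of_nonneg_left (T.le_opNorm w) (norm_nonneg w))
  nlinarith [neg_abs_le (inner ℝ w (T w))]

theorem eigenvalue_sub_le_norm_sub [FiniteDimensional ℝ F] {n : ℕ} (hn : finrank ℝ F ≤ n)
    {A A' : F →L[ℝ] F} {μ μ' : Fin n → ℝ} (hμ : Antitone μ) (hμ' : Antitone μ')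
    {u u' : Fin n → F} (hu : Orthonormal ℝ u) (hu' : Orthonormal ℝ u')
    (hA : ∀ i, A (u i) = μ i • u i) (hA' : ∀ i, A' (u' i) = μ' i • u' i) (j : Fin n) :
    μ j - μ' j ≤ ‖A' - A‖ := by
  obtain ⟨w, hwS, hwT, hw0⟩ := Submodule.exists_ne_zero_mem_inf_of_finrank_lt_add
    (S := Submodule.span ℝ (Set.range fun i : Iic j ↦ u i))
    (T := Submodule.span ℝ (Set.range fun i : Ici j ↦ u' i)) <| by
    rw [hu.finrank_span_restrict, hu'.finrank_span_restrict, Fin.card_Iic, Fin.card_Ici]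
    omega
  have hAw : μ j * ‖w‖ ^ 2 ≤ inner ℝ w (A w) :=
    (hu.comp _ Subtype.val_injective).le_inner_map_self_of_mem_span (A := (A : F →ₗ[ℝ] F))
      (fun i ↦ hA i.1) (fun i ↦ hμ (mem_Iic.1 i.2)) hwS
  have hA'w : inner ℝ w (A' w) ≤ μ' j * ‖w‖ ^ 2 :=
    (hu'.comp _ Subtype.val_injective).inner_map_self_le_of_mem_span (A := (A' : F →ₗ[ℝ] F))
      (fun i ↦ hA' i.1) (fun i ↦ hμ' (mem_Ici.1 i.2)) hwT
  have hdiff := (A' - A).neg_norm_mul_norm_sq_le_inner_map_self w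
  rw [sub_apply, inner_sub_right] at hdiff
  have hw : 0 < ‖w‖ ^ 2 := by positivity
  nlinarith

theorem abs_eigenvalue_sub_le_norm_sub [FiniteDimensional ℝ F] {n : ℕ} (hn : finrank ℝ F ≤ n)
    {A A' : F →L[ℝ] F} {μ μ' : Fin n → ℝ} (hμ : Antitone μ) (hμ' : Antitone μ')
    {u u' : Fin n → F} (hu : Orthonormal ℝ u) (hu' : Orthonormal ℝ u')
    (hA : ∀ i, A (u i) = μ i • u i) (hA' : ∀ i, A' (u' i) = μ' i • u' i) (j : Fin n) :
    |μ' j - μ j| ≤ ‖A' - A‖ :=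
  abs_sub_le_iff.2
    ⟨(eigenvalue_sub_le_norm_sub hn hμ' hμ hu' hu hA' hA j).trans_eq (norm_sub_rev _ _),
      eigenvalue_sub_le_norm_sub hn hμ hμ' hu hu' hA hA' j⟩

end InnerProductSpace

theorem orthonormal_toLp_of_sum_mul_eq_ite {ι n : Type*} [Fintype n] [DecidableEq ι]
    {v : ι → n → ℝ} (h : ∀ i j, ∑ x, v i x * v j x = if i = j then 1 else 0) :
    Orthonormal ℝ fun i ↦ WithLp.toLp 2 (v i) := by
  rw [orthonormal_iff_ite]
  intro i j
  simpa [PiLp.inner_apply, mul_comm] using h i j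

theorem Matrix.toEuclideanLin_toLp_of_mulVec_eq_smul {n : Type*} [Fintype n] [DecidableEq n]
    {M : Matrix n n ℝ} {x : n → ℝ} {c : ℝ} (h : M.mulVec x = c • x) :
    M.toEuclideanLin (WithLp.toLp 2 x) = c • WithLp.toLp 2 x := by
  rw [toLpLin_toLp]
  exact congrArg (WithLp.toLp 2) h

theorem abs_eigenvalue_sub_le_opNorm_sub {N : ℕ} {B Be : Matrix (Fin N) (Fin N) ℝ}
    {lam lame : Fin N → ℝ} (hlam : Antitone lam) (hlame : Antitone lame)
    {v ve : Fin N → Fin N → ℝ}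
    (hv_on : ∀ i j, ∑ x, v i x * v j x = if i = j then 1 else 0)
    (hve_on : ∀ i j, ∑ x, ve i x * ve j x = if i = j then 1 else 0)
    (hv_eig : ∀ j, B.mulVec (v j) = lam j • v j) (hve_eig : ∀ j, Be.mulVec (ve j) = lame j • ve j)
    (j : Fin N) : |lame j - lam j| ≤ opNorm (Be - B) := by
  unfold opNorm
  rw [map_sub, map_sub]
  exact abs_eigenvalue_sub_le_norm_sub finrank_euclideanSpace_fin.le hlam hlame
    (orthonormal_toLp_of_sum_mul_eq_ite hv_on) (orthonormal_toLp_of_sum_mul_eq_ite hve_on)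
    (fun i ↦ Matrix.toEuclideanLin_toLp_of_mulVec_eq_smul (hv_eig i))
    (fun i ↦ Matrix.toEuclideanLin_toLp_of_mulVec_eq_smul (hve_eig i)) j

theorem sum_sqrt_mul_sub_sqrt_mul_sq_le {n : Type*} [Fintype n] {x y : n → ℝ}
    (hx : ∑ i, x i * x i = 1) (hy : ∑ i, y i * y i = 1) (hxy : 0 ≤ ∑ i, x i * y i)
    {a b L : ℝ} (hbL : b ≤ L) (hL : 0 ≤ L) :
    ∑ i, (√a * x i - √b * y i) ^ 2
      ≤ 4 * L * sin (arccos (∑ i, x i * y i)) ^ 2 + 2 * |a - b| := by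
  have hinner (x y : n → ℝ) :
      inner ℝ (WithLp.toLp 2 x) (WithLp.toLp 2 y) = ∑ i, x i * y i := by
    simp [PiLp.inner_apply, mul_comm]
  have hnorm (x : n → ℝ) (hx : ∑ i, x i * x i = 1) : ‖WithLp.toLp 2 x‖ = 1 := by
    rw [norm_eq_sqrt_real_inner, hinner, hx, sqrt_one]
  convert norm_sqrt_smul_sub_sqrt_smul_sq_le (hnorm x hx) (hnorm y hy)
    ((hinner x y).symm ▸ hxy) hbL hL using 2
  · rw [EuclideanSpace.real_norm_sq_eq]
    rfl
  · rw [hinner]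

/-- Error estimate of Sinkhorn MDS, abstract form.
`B` and `B_ε` are symmetric PSD matrices with eigenvalues `lam`, `lame`
(decreasing, 0-indexed: `lam ⟨j-1,_⟩` is `λ_j`) and orthonormal eigenbases
`v`, `ve` chosen with `⟨v_{j,ε}, v_j⟩ ≥ 0`.  For `1 ≤ k < N` with
`λ_k > λ_{k+1}` and `λ_k > 0`, assuming the Davis–Kahan-type bound,
the MDS embeddings `Φ(i)_j = √λ_j v_j(i)` and `Φ_ε(i)_j = √λ_{j,ε} v_{j,ε}(i)`
satisfy
`Σ_i ‖Φ_ε(i) − Φ(i)‖² ≤ 16 λ_1 k ‖B_ε − B‖₂²/(λ_k − λ_{k+1})² + 2k‖B_ε − B‖₂`. -/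
theorem sinkhorn_mds_error_estimate {N k : ℕ} (hkN : k < N)
    (B Be : Matrix (Fin N) (Fin N) ℝ)
    (lam lame : Fin N → ℝ)
    (hlam : ∀ i j : Fin N, i ≤ j → lam j ≤ lam i)
    (hlame : ∀ i j : Fin N, i ≤ j → lame j ≤ lame i)
    (v ve : Fin N → Fin N → ℝ)
    (hv_on : ∀ i j, (∑ x, v i x * v j x) = if i = j then (1 : ℝ) else 0)
    (hve_on : ∀ i j, (∑ x, ve i x * ve j x) = if i = j then (1 : ℝ) else 0)
    (hv_eig : ∀ j, B.mulVec (v j) = lam j • v j)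
    (hve_eig : ∀ j, Be.mulVec (ve j) = lame j • ve j)
    (hsign : ∀ j, 0 ≤ ∑ x, ve j x * v j x)
    (hpos : 0 < lam ⟨k - 1, by omega⟩)
    (hDK : ∑ j : Fin k,
        Real.sin (Real.arccos (∑ x, ve (Fin.castLE hkN.le j) x * v (Fin.castLE hkN.le j) x)) ^ 2
      ≤ 4 * (k : ℝ) * opNorm (Be - B) ^ 2
          / (lam ⟨k - 1, by omega⟩ - lam ⟨k, hkN⟩) ^ 2) :
    ∑ i : Fin N, ∑ j : Fin k,
        (Real.sqrt (lame (Fin.castLE hkN.le j)) * ve (Fin.castLE hkN.le j) i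
          - Real.sqrt (lam (Fin.castLE hkN.le j)) * v (Fin.castLE hkN.le j) i) ^ 2
      ≤ 16 * lam ⟨0, by omega⟩ * (k : ℝ)
            / (lam ⟨k - 1, by omega⟩ - lam ⟨k, hkN⟩) ^ 2 * opNorm (Be - B) ^ 2
        + 2 * (k : ℝ) * opNorm (Be - B) := by
  set e : Fin k → Fin N := Fin.castLE hkN.le
  have hlam₁ : 0 ≤ lam ⟨0, by omega⟩ := hpos.le.trans (hlam _ _ (Nat.zero_le _))
  have hcolumn (j : Fin k) :
      ∑ i, (√(lame (e j)) * ve (e j) i - √(lam (e j)) * v (e j) i) ^ 2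
        ≤ 4 * lam ⟨0, by omega⟩ * sin (arccos (∑ x, ve (e j) x * v (e j) x)) ^ 2
          + 2 * opNorm (Be - B) := by
    set J := e j
    grw [sum_sqrt_mul_sub_sqrt_mul_sq_le ((hve_on J J).trans (if_pos rfl))
      ((hv_on J J).trans (if_pos rfl)) (hsign J) (hlam _ J (Nat.zero_le _)) hlam₁,
      abs_eigenvalue_sub_le_opNorm_sub (fun _ _ ↦ hlam _ _) (fun _ _ ↦ hlame _ _)
        hv_on hve_on hv_eig hve_eig J]
  rw [sum_comm]
  grw [sum_le_sum fun j _ ↦ hcolumn j, sum_add_distrib, ← mul_sum, hDK]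
  rw [sum_const, card_univ, Fintype.card_fin, nsmul_eq_mul]
  exact le_of_eq (by ring)
end
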